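/- Let (b₀,b₁,…) be a sequence of integers such that p⁽ⁿ⁾ → ∞ as n → ∞, and let (v_n) be the sequence of convergents of [b₀,b₁,…]. Then for every v ∈ ℚ∞ = ℚ ∪ {∞}, the set {k ∈ ℕ : v_k = v} is finite. -/

import Mathlib

open Filter Topology OnePoint

/-- The Möbius map `z ↦ b - 1/z` on the one-point compactification `ℝ∞` of `ℝ`. -/
noncomputable def mob (b : ℤ) (z : OnePoint ℝ) : OnePoint ℝ :=
  Option.elim z ((b : ℝ) : OnePoint ℝ)
    (fun x => if x = 0 then (∞ : OnePoint ℝ) else (((b : ℝ) - 1 / x : ℝ) : OnePoint ℝ))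

/-- Value of a finite continued fraction `[b₀, …, b_m]`, i.e. `s₀(s₁(⋯ s_m(∞)))`. -/
noncomputable def cfVal : List ℤ → OnePoint ℝ
  | [] => ∞
  | b :: t => mob b (cfVal t)

/-- The `n`th convergent `v_n = S_n(∞)` of the continued fraction `[b₀, b₁, …]`. -/
noncomputable def cfConv (b : ℕ → ℤ) (n : ℕ) : OnePoint ℝ :=
  cfVal ((List.range (n + 1)).map b)

/-- `m` is a positive index at which the coefficient is `0`, `1` or `-1`. -/
def badIdx (b : ℕ → ℤ) (m : ℕ) : Prop :=
  1 ≤ m ∧ (b m = 0 ∨ b m = 1 ∨ b m = -1)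

instance (b : ℕ → ℤ) : DecidablePred (badIdx b) := fun m => by
  unfold badIdx; infer_instance

-- The singularization map `Φ` on integer sequences.
open Classical in
noncomputable def Phi (b : ℕ → ℤ) : ℕ → ℤ :=
  if h : ∃ m, badIdx b m then
    let m := Nat.find h
    if b m = 0 then
      fun k => if k + 1 < m then b k
        else if k = m - 1 then b (m - 1) + b (m + 1)
        else b (k + 2)
    else if b m = 1 then
      fun k => if k + 1 < m then b k
        else if k = m - 1 then b (m - 1) - 1
        else if k = m then b (m + 1) - 1
        else b (k + 1)
    else
      fun k => if k + 1 < m then b k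
        else if k = m - 1 then b (m - 1) + 1
        else if k = m then b (m + 1) + 1
        else b (k + 1)
  else b

-- `p(b) ∈ ℕ ∪ {∞}`: the least positive index at which `0`, `1` or `-1` occurs.
open Classical in
noncomputable def pIdx (b : ℕ → ℤ) : ℕ∞ :=
  if h : ∃ m, badIdx b m then (Nat.find h : ℕ∞) else ⊤

/-- `p⁽ⁿ⁾ → ∞` as `n → ∞`. -/
def PTendsToTop (b : ℕ → ℤ) : Prop :=
  ∀ N : ℕ, ∃ M : ℕ, ∀ n ≥ M, (N : ℕ∞) < pIdx (Phi^[n] b)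

/-- `p = liminf pⁿ`, as a natural number (junk value if the liminf is `∞`). -/
noncomputable def pLim (b : ℕ → ℤ) : ℕ :=
  (Filter.liminf (fun n => pIdx (Phi^[n] b)) Filter.atTop).toNat

/-- `q⁽ⁿ⁾ = |b⁽ⁿ⁾_{p-1}|`. -/
noncomputable def qSeq (b : ℕ → ℤ) (n : ℕ) : ℕ :=
  ((Phi^[n] b) (pLim b - 1)).natAbs

/-- Two continued fractions have the same tail. -/
def SameTail (b c : ℕ → ℤ) : Prop := ∃ r s : ℕ, ∀ k : ℕ, b (r + k) = c (s + k)

/-- `bstar` is the limit continued fraction: each coefficient of `Φⁿ(b)` stabilises on it. -/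
def EventuallyCoeff (b bstar : ℕ → ℤ) : Prop :=
  ∀ k : ℕ, ∃ N : ℕ, ∀ n ≥ N, Phi^[n] b k = bstar k

/-- The point of `ℝ∞` represented by the integer fraction `a/b` (`∞` when `b = 0`). -/
noncomputable def intPt (a b : ℤ) : OnePoint ℝ :=
  if b = 0 then ∞ else (((a : ℝ) / (b : ℝ)) : OnePoint ℝ)

/-- Adjacency in the Farey graph: `x = a/b`, `y = c/d` with `ad - bc = ±1`. -/
def FareyAdj (x y : OnePoint ℝ) : Prop :=
  ∃ a b c d : ℤ, x = intPt a b ∧ y = intPt c d ∧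
    (a * d - b * c = 1 ∨ a * d - b * c = -1)

/-- `x` is an extended rational, i.e. a member of `ℚ∞ = ℚ ∪ {∞} ⊆ ℝ∞`. -/
def IsExtRat (x : OnePoint ℝ) : Prop :=
  x = ∞ ∨ ∃ q : ℚ, x = ((q : ℝ) : OnePoint ℝ)

-- One step of the index-tracking sequence, for the current coefficient sequence `c`.
open Classical in
noncomputable def eStep (c : ℕ → ℤ) (e : ℕ) : Option ℕ :=
  if h : ∃ m, badIdx c m then
    let m := Nat.find h
    if c m = 0 then
      if e + 2 ≤ m then Option.some e
      else if e = m - 1 ∨ e = m then (none : Option ℕ)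
      else Option.some (e - 2)
    else
      if e + 2 ≤ m then Option.some e
      else if e = m - 1 then (none : Option ℕ)
      else Option.some (e - 1)
  else Option.some e

/-- The index-tracking sequence `e⁽⁰⁾(k), e⁽¹⁾(k), …` (`none` once it has terminated). -/
noncomputable def eSeq (b : ℕ → ℤ) (k : ℕ) : ℕ → Option ℕ
  | 0 => Option.some k
  | n + 1 => (eSeq b k n).bind (eStep (Phi^[n] b))

/-!
Write `v = a/d`. Since `mob b` is the Möbius map of `!![b, -1; 1, 0]`, the convergent `v_e` is read
off the first column of the product of these matrices, and while `|b_i| ≥ 2` for `1 ≤ i ≤ e` the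
denominators of the convergents strictly increase; hence `v_e = a/d` with `e < p` forces `e < |d|`.

A step of `Φ` keeps the values of the convergents: the convergent at index `e` reappears at index
`eStep e ≤ e`, order-preservingly, except for those at `p - 1` (and at `p` when `b_p = 0`, where
`v_p = v_{p-2}`), which are dropped. Once `p⁽ⁿ⁾ > |d| + 1`, dropping an occurrence of `a/d` would
contradict the bound above, so from then on every occurrence survives and its index, being
non-increasing, settles at some `e` with `e + 2 ≤ p⁽ⁿ⁾`, so `e < |d|`. Finitely many occurrences are
dropped before that stage and the survivors inject into `[0, |d|)`.
-/

def mobMat (b : ℤ) : Matrix (Fin 2) (Fin 2) ℤ := !![b, -1; 1, 0]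

def listMat (l : List ℤ) : Matrix (Fin 2) (Fin 2) ℤ := (l.map mobMat).prod

def convMat (c : ℕ → ℤ) (n : ℕ) : Matrix (Fin 2) (Fin 2) ℤ := listMat ((List.range n).map c)

lemma det_listMat (l : List ℤ) : (listMat l).det = 1 := by
  induction l with
  | nil => simp [listMat]
  | cons b t ih =>
    rw [listMat, List.map_cons, List.prod_cons, Matrix.det_mul, ← listMat, ih]
    simp [mobMat, Matrix.det_fin_two_of]

lemma intPt_mul_left {u : ℤ} (hu : u ≠ 0) (a d : ℤ) : intPt (u * a) (u * d) = intPt a d := by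
  have hu' : (u : ℝ) ≠ 0 := by exact_mod_cast hu
  simp only [intPt, mul_eq_zero, hu, false_or]
  split_ifs
  · rfl
  · push_cast
    rw [mul_div_mul_left _ _ hu']

lemma mob_infty (b : ℤ) : mob b ∞ = ((b : ℝ) : OnePoint ℝ) := rfl

lemma mob_coe (b : ℤ) (x : ℝ) :
    mob b x = if x = 0 then ∞ else (((b : ℝ) - 1 / x : ℝ) : OnePoint ℝ) := rfl

lemma mob_intPt (b p q : ℤ) (h : p ≠ 0 ∨ q ≠ 0) : mob b (intPt p q) = intPt (b * p - q) p := by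
  by_cases hq : q = 0
  · have hp : p ≠ 0 := h.resolve_right (not_not.mpr hq)
    have hp' : (p : ℝ) ≠ 0 := by exact_mod_cast hp
    simp [intPt, hq, hp, mob_infty, hp']
  · have hq' : (q : ℝ) ≠ 0 := by exact_mod_cast hq
    by_cases hp : p = 0
    · simp [intPt, hq, hp, mob_coe]
    · have hp' : (p : ℝ) ≠ 0 := by exact_mod_cast hp
      simp only [intPt, hq, hp, if_false, mob_coe, div_eq_zero_iff, hp', hq', or_self]
      congr 1
      push_cast
      field_simp

lemma cfVal_eq_intPt (l : List ℤ) : cfVal l = intPt (listMat l 0 0) (listMat l 1 0) := by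
  induction l with
  | nil => simp [cfVal, listMat, intPt]
  | cons b t ih =>
    have hcol : listMat t 0 0 ≠ 0 ∨ listMat t 1 0 ≠ 0 := by
      by_contra! h
      simpa [Matrix.det_fin_two, h.1, h.2] using det_listMat t
    rw [cfVal, ih, mob_intPt _ _ _ hcol]
    simp [listMat, mobMat, Matrix.mul_apply, Fin.sum_univ_two, sub_eq_add_neg]

lemma convMat_succ (c : ℕ → ℤ) (n : ℕ) : convMat c (n + 1) = convMat c n * mobMat (c n) := by
  simp [convMat, listMat, List.range_succ]

lemma cfConv_eq_intPt (c : ℕ → ℤ) (k : ℕ) :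
    cfConv c k = intPt (convMat c (k + 1) 0 0) (convMat c (k + 1) 1 0) :=
  cfVal_eq_intPt _

lemma abs_convMat_growth {c : ℕ → ℤ} {n : ℕ} (hn : 1 ≤ n)
    (hc : ∀ i, 1 ≤ i → i < n → 2 ≤ |c i|) :
    |convMat c n 1 1| < |convMat c n 1 0| ∧ (n : ℤ) ≤ |convMat c n 1 0| := by
  induction n, hn using Nat.le_induction with
  | base => simp [convMat, listMat, mobMat]
  | succ n hn ih =>
    obtain ⟨ih₁, ih₂⟩ := ih fun i hi hin => hc i hi (by omega)
    have hcn := hc n hn (by omega)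
    have hq : convMat c (n + 1) 1 0 = convMat c n 1 0 * c n + convMat c n 1 1 := by
      simp [convMat_succ, mobMat, Matrix.mul_apply, Fin.sum_univ_two]
    have hr : convMat c (n + 1) 1 1 = -convMat c n 1 0 := by
      simp [convMat_succ, mobMat, Matrix.mul_apply, Fin.sum_univ_two]
    have hgrow : |convMat c n 1 0| + 1 ≤ |convMat c (n + 1) 1 0| := by
      rw [hq]
      have := abs_sub_abs_le_abs_sub (convMat c n 1 0 * c n) (-convMat c n 1 1)
      rw [sub_neg_eq_add, abs_neg, abs_mul] at this
      nlinarith [abs_nonneg (convMat c n 1 0)]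
    rw [hr, abs_neg]
    push_cast
    constructor <;> linarith

lemma natAbs_le_of_intPt_eq {p q a d : ℤ} (hpq : IsCoprime p q) (hq : q ≠ 0)
    (h : intPt p q = intPt a d) : q.natAbs ≤ d.natAbs := by
  by_cases hd : d = 0
  · simp [intPt, hq, hd] at h
  have hq' : (q : ℝ) ≠ 0 := by exact_mod_cast hq
  have hd' : (d : ℝ) ≠ 0 := by exact_mod_cast hd
  simp only [intPt, hq, hd, if_false, OnePoint.coe_eq_coe] at h
  rw [div_eq_div_iff hq' hd'] at h
  have hcross : p * d = a * q := by exact_mod_cast h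
  have hdvd : q ∣ d := hpq.symm.dvd_of_dvd_mul_left ⟨a, by rw [hcross, mul_comm]⟩
  exact Int.natAbs_le_of_dvd_ne_zero hdvd hd

lemma two_le_abs_of_lt_pIdx {c : ℕ → ℤ} {i : ℕ} (hi : 1 ≤ i) (h : (i : ℕ∞) < pIdx c) :
    2 ≤ |c i| := by
  have hgood : ¬ badIdx c i := by
    unfold pIdx at h
    split_ifs at h with hb
    · exact Nat.find_min hb (by exact_mod_cast h)
    · exact fun hi => hb ⟨i, hi⟩
  simp only [badIdx, hi, true_and, not_or] at hgood
  rcases abs_cases (c i) with ⟨h, _⟩ | ⟨h, _⟩ <;> omega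

lemma lt_natAbs_of_cfConv_eq_intPt {c : ℕ → ℤ} {e : ℕ} (he : (e : ℕ∞) < pIdx c) {a d : ℤ}
    (hv : cfConv c e = intPt a d) : e < d.natAbs := by
  have hgrow := (abs_convMat_growth (c := c) (n := e + 1) (by omega) fun i hi hie =>
    two_le_abs_of_lt_pIdx hi (lt_of_le_of_lt (by exact_mod_cast (by omega : i ≤ e)) he)).2
  have hcop : IsCoprime (convMat c (e + 1) 0 0) (convMat c (e + 1) 1 0) := by
    have hdet := det_listMat ((List.range (e + 1)).map c)
    rw [Matrix.det_fin_two] at hdet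
    exact ⟨convMat c (e + 1) 1 1, -convMat c (e + 1) 0 1, by rw [← hdet, convMat]; ring⟩
  rw [cfConv_eq_intPt] at hv
  have hle := natAbs_le_of_intPt_eq hcop (by intro h0; simp [h0] at hgrow; omega) hv
  rw [Int.abs_eq_natAbs] at hgrow
  omega

lemma convMat_congr {c c' : ℕ → ℤ} {n : ℕ} (h : ∀ i < n, c' i = c i) :
    convMat c' n = convMat c n := by
  unfold convMat
  congr 1
  exact List.map_congr_left fun i hi => h i (List.mem_range.mp hi)

lemma cfConv_congr {c c' : ℕ → ℤ} {k : ℕ} (h : ∀ i ≤ k, c' i = c i) :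
    cfConv c' k = cfConv c k := by
  unfold cfConv
  congr 1
  exact List.map_congr_left fun i hi => h i (Nat.lt_succ_iff.mp (List.mem_range.mp hi))

lemma cfConv_eq_of_convMat_col {c c' : ℕ → ℤ} {k k' : ℕ} {u : ℤ} (hu : u ≠ 0)
    (h : ∀ i, convMat c' (k' + 1) i 0 = u * convMat c (k + 1) i 0) :
    cfConv c' k' = cfConv c k := by
  rw [cfConv_eq_intPt, cfConv_eq_intPt, h, h, intPt_mul_left hu]

lemma mobMat_mul_mobMat_zero_mul (x y : ℤ) :
    mobMat x * mobMat 0 * mobMat y = -mobMat (x + y) := by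
  ext i j
  fin_cases i <;> fin_cases j <;> simp [mobMat, Matrix.mul_apply, Fin.sum_univ_two]

lemma mobMat_mul_mobMat_unit_mul {ε : ℤ} (hε : ε = 1 ∨ ε = -1) (x y : ℤ) :
    mobMat x * mobMat ε * mobMat y = ε • (mobMat (x - ε) * mobMat (y - ε)) := by
  ext i j
  rcases hε with rfl | rfl <;> fin_cases i <;> fin_cases j <;>
    simp [mobMat, Matrix.mul_apply, Fin.sum_univ_two] <;> ring

lemma cfConv_skip_zero {c : ℕ → ℤ} {j : ℕ} (h0 : c (j + 2) = 0) :
    cfConv c (j + 2) = cfConv c j := by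
  refine cfConv_eq_of_convMat_col (u := -1) (by norm_num) fun i => ?_
  simp [convMat_succ, h0, mobMat, Matrix.mul_apply, Fin.sum_univ_two]

lemma cfConv_of_merge_zero {c c' : ℕ → ℤ} {j : ℕ} (hlow : ∀ i < j, c' i = c i)
    (hj : c' j = c j + c (j + 2)) (h0 : c (j + 1) = 0) (hhigh : ∀ i > j, c' i = c (i + 2))
    {k : ℕ} (hk : j ≤ k) : cfConv c' k = cfConv c (k + 2) := by
  have hmat : ∀ n ≥ j + 1, convMat c' n = -convMat c (n + 2) := by
    intro n hn
    induction n, hn using Nat.le_induction with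
    | base =>
      have hc : convMat c (j + 1 + 2) =
          convMat c j * (mobMat (c j) * mobMat 0 * mobMat (c (j + 2))) := by
        simp only [convMat_succ, h0, mul_assoc]
      rw [convMat_succ, convMat_congr hlow, hj, hc, mobMat_mul_mobMat_zero_mul, mul_neg,
        neg_neg]
    | succ n hn ih =>
      rw [convMat_succ, ih, hhigh n (by omega), convMat_succ (n := n + 2), neg_mul]
  refine cfConv_eq_of_convMat_col (u := -1) (by norm_num) fun i => ?_
  simp [hmat (k + 1) (by omega)]

lemma cfConv_of_merge_unit {c c' : ℕ → ℤ} {j : ℕ} (hlow : ∀ i < j, c' i = c i)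
    (hε : c (j + 1) = 1 ∨ c (j + 1) = -1) (hj : c' j = c j - c (j + 1))
    (hj₁ : c' (j + 1) = c (j + 2) - c (j + 1)) (hhigh : ∀ i > j + 1, c' i = c (i + 1))
    {k : ℕ} (hk : j ≤ k) : cfConv c' k = cfConv c (k + 1) := by
  have hε0 : c (j + 1) ≠ 0 := by omega
  obtain rfl | hk := hk.eq_or_lt
  · refine cfConv_eq_of_convMat_col hε0 fun i => ?_
    rw [convMat_succ, convMat_congr hlow, hj, convMat_succ, convMat_succ]
    rcases hε with h | h <;> simp [h, mobMat, Matrix.mul_apply, Fin.sum_univ_two] <;> ring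
  have hmat : ∀ n ≥ j + 2, convMat c' n = c (j + 1) • convMat c (n + 1) := by
    intro n hn
    induction n, hn using Nat.le_induction with
    | base =>
      have hc : convMat c (j + 2 + 1) =
          convMat c j * (mobMat (c j) * mobMat (c (j + 1)) * mobMat (c (j + 2))) := by
        simp only [convMat_succ, mul_assoc]
      rw [convMat_succ, convMat_succ, convMat_congr hlow, hj, hj₁, hc,
        mobMat_mul_mobMat_unit_mul hε, mul_smul_comm, smul_smul, mul_assoc]
      rcases hε with h | h <;> simp [h]
    | succ n hn ih =>
      rw [convMat_succ, ih, hhigh n (by omega), convMat_succ (n := n + 1), smul_mul_assoc]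
  refine cfConv_eq_of_convMat_col hε0 fun i => ?_
  simp [hmat (k + 1) (by omega)]

section Phi

variable {c : ℕ → ℤ} (h : ∃ m, badIdx c m)

lemma pIdx_of_exists : pIdx c = Nat.find h := by
  unfold pIdx
  rw [dif_pos h]

lemma Phi_of_lt {k : ℕ} (hk : k + 1 < Nat.find h) : Phi c k = c k := by
  unfold Phi
  rw [dif_pos h]
  split_ifs <;> simp [hk]

lemma Phi_of_exists_of_eq_zero (h0 : c (Nat.find h) = 0) :
    Phi c = fun k => if k + 1 < Nat.find h then c k
      else if k = Nat.find h - 1 then c (Nat.find h - 1) + c (Nat.find h + 1)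
      else c (k + 2) := by
  unfold Phi
  rw [dif_pos h]
  simp only [h0, if_true]

lemma Phi_of_exists_of_ne_zero (h0 : c (Nat.find h) ≠ 0) :
    Phi c = fun k => if k + 1 < Nat.find h then c k
      else if k = Nat.find h - 1 then c (Nat.find h - 1) - c (Nat.find h)
      else if k = Nat.find h then c (Nat.find h + 1) - c (Nat.find h)
      else c (k + 1) := by
  have hunit := (Nat.find_spec h).2
  unfold Phi
  rw [dif_pos h, if_neg h0]
  funext k
  rcases hunit with h' | h' | h'
  · exact absurd h' h0
  · simp [h']
  · simp only [h', if_neg (by norm_num : (-1 : ℤ) ≠ 1), sub_neg_eq_add]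

lemma cfConv_Phi_of_eq_zero (h0 : c (Nat.find h) = 0) {k : ℕ} (hk : Nat.find h ≤ k + 1) :
    cfConv (Phi c) k = cfConv c (k + 2) := by
  obtain ⟨j, hj⟩ := Nat.exists_eq_add_one.mpr (Nat.find_spec h).1
  rw [hj] at h0 hk
  rw [Phi_of_exists_of_eq_zero h (hj ▸ h0), hj]
  refine cfConv_of_merge_zero (fun i hi => ?_) ?_ h0 (fun i hi => ?_) (by omega) <;>
    split_ifs <;> first | rfl | omega

lemma cfConv_Phi_of_ne_zero (h0 : c (Nat.find h) ≠ 0) {k : ℕ} (hk : Nat.find h ≤ k + 1) :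
    cfConv (Phi c) k = cfConv c (k + 1) := by
  obtain ⟨j, hj⟩ := Nat.exists_eq_add_one.mpr (Nat.find_spec h).1
  have hunit : c (j + 1) = 1 ∨ c (j + 1) = -1 := by
    rcases (Nat.find_spec h).2 with h' | h' | h' <;> rw [hj] at h' h0
    exacts [absurd h' h0, Or.inl h', Or.inr h']
  rw [hj] at hk
  rw [Phi_of_exists_of_ne_zero h h0, hj]
  refine cfConv_of_merge_unit (fun i hi => ?_) hunit ?_ ?_ (fun i hi => ?_) (by omega) <;>
    split_ifs <;> first | rfl | omega

end Phi

section eStep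

variable {c : ℕ → ℤ}

lemma eStep_of_not_exists (h : ¬ ∃ m, badIdx c m) (e : ℕ) : eStep c e = Option.some e := by
  unfold eStep
  rw [dif_neg h]

lemma eStep_eq_some_cases (h : ∃ m, badIdx c m) {e f : ℕ} (hf : eStep c e = Option.some f) :
    (e + 2 ≤ Nat.find h ∧ f = e) ∨ (Nat.find h < e ∧ c (Nat.find h) = 0 ∧ f = e - 2) ∨
      (Nat.find h ≤ e ∧ c (Nat.find h) ≠ 0 ∧ f = e - 1) := by
  have hm := (Nat.find_spec h).1
  unfold eStep at hf
  rw [dif_pos h] at hf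
  dsimp only at hf
  split_ifs at hf <;> simp only [Option.some.injEq] at hf <;> omega

lemma eStep_eq_none_cases (h : ∃ m, badIdx c m) {e : ℕ} (hf : eStep c e = none) :
    e + 1 = Nat.find h ∨ (c (Nat.find h) = 0 ∧ e = Nat.find h) := by
  have hm := (Nat.find_spec h).1
  unfold eStep at hf
  rw [dif_pos h] at hf
  dsimp only at hf
  split_ifs at hf <;> simp only at hf <;> omega

lemma cfConv_Phi_of_eStep {e f : ℕ} (hf : eStep c e = Option.some f) :
    cfConv (Phi c) f = cfConv c e := by
  by_cases h : ∃ m, badIdx c m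
  · have hm := (Nat.find_spec h).1
    rcases eStep_eq_some_cases h hf with ⟨he, rfl⟩ | ⟨he, h0, rfl⟩ | ⟨he, h0, rfl⟩
    · exact cfConv_congr fun i hi => Phi_of_lt h (by omega)
    · rw [cfConv_Phi_of_eq_zero h h0 (by omega)]
      congr 1
      omega
    · rw [cfConv_Phi_of_ne_zero h h0 (by omega)]
      congr 1
      omega
  · rw [eStep_of_not_exists h, Option.some_inj] at hf
    rw [← hf]
    unfold Phi
    rw [dif_neg h]

lemma eStep_lt_eStep {e e' f f' : ℕ} (hf : eStep c e = Option.some f)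
    (hf' : eStep c e' = Option.some f') (he : e < e') : f < f' := by
  by_cases h : ∃ m, badIdx c m
  · have hm := (Nat.find_spec h).1
    rcases eStep_eq_some_cases h hf with ⟨_, rfl⟩ | ⟨_, _, rfl⟩ | ⟨_, _, rfl⟩ <;>
      rcases eStep_eq_some_cases h hf' with ⟨_, rfl⟩ | ⟨_, _, rfl⟩ | ⟨_, _, rfl⟩ <;>
      omega
  · rw [eStep_of_not_exists h, Option.some_inj] at hf hf'
    omega

lemma eStep_le {e f : ℕ} (hf : eStep c e = Option.some f) : f ≤ e := by
  by_cases h : ∃ m, badIdx c m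
  · rcases eStep_eq_some_cases h hf with ⟨_, rfl⟩ | ⟨_, _, rfl⟩ | ⟨_, _, rfl⟩ <;> omega
  · rw [eStep_of_not_exists h, Option.some_inj] at hf
    omega

lemma lt_pIdx_of_eStep_eq_self {e : ℕ} (hf : eStep c e = Option.some e) :
    (e : ℕ∞) < pIdx c := by
  by_cases h : ∃ m, badIdx c m
  · rw [pIdx_of_exists h, Nat.cast_lt]
    have hm := (Nat.find_spec h).1
    rcases eStep_eq_some_cases h hf with hcase | hcase | hcase <;> omega
  · simp [pIdx, h]

lemma pIdx_le_of_eStep_eq_none {e : ℕ} (hf : eStep c e = none) {a d : ℤ}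
    (hv : cfConv c e = intPt a d) : pIdx c ≤ (d.natAbs + 1 : ℕ) := by
  by_cases h : ∃ m, badIdx c m
  · rw [pIdx_of_exists h, Nat.cast_le]
    rcases eStep_eq_none_cases h hf with he | ⟨h0, rfl⟩
    · have := lt_natAbs_of_cfConv_eq_intPt (by rw [pIdx_of_exists h]; norm_cast; omega) hv
      omega
    · obtain hm | ⟨j, hj⟩ : Nat.find h < 2 ∨ ∃ j, Nat.find h = j + 2 :=
        (Nat.lt_or_ge _ 2).imp_right fun hm => ⟨Nat.find h - 2, by omega⟩
      · omega
      rw [hj] at h0 hv ⊢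
      rw [cfConv_skip_zero h0] at hv
      have := lt_natAbs_of_cfConv_eq_intPt (by rw [pIdx_of_exists h, hj]; norm_cast; omega) hv
      omega
  · rw [eStep_of_not_exists h] at hf
    exact absurd hf (by simp)

lemma finite_setOf_eStep_eq_none (c : ℕ → ℤ) : {e | eStep c e = none}.Finite := by
  by_cases h : ∃ m, badIdx c m
  · refine (Set.toFinite {Nat.find h - 1, Nat.find h}).subset fun e he => ?_
    rcases eStep_eq_none_cases h he with he | ⟨_, rfl⟩
    · simp; omega
    · simp
  · simp [eStep_of_not_exists h]

end eStep

section eSeq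

variable {b : ℕ → ℤ}

lemma cfConv_iterate_of_eSeq {k n e : ℕ} (he : eSeq b k n = Option.some e) :
    cfConv (Phi^[n] b) e = cfConv b k := by
  induction n generalizing e with
  | zero => cases he; rfl
  | succ n ih =>
    obtain ⟨e', he', hstep⟩ := Option.bind_eq_some_iff.mp he
    rw [Function.iterate_succ_apply', cfConv_Phi_of_eStep hstep, ih he']

lemma eSeq_lt_eSeq {j k n ej ek : ℕ} (hjk : j < k) (hj : eSeq b j n = Option.some ej)
    (hk : eSeq b k n = Option.some ek) : ej < ek := by
  induction n generalizing ej ek with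
  | zero => cases hj; cases hk; exact hjk
  | succ n ih =>
    obtain ⟨ej', hj', hstep⟩ := Option.bind_eq_some_iff.mp hj
    obtain ⟨ek', hk', hstep'⟩ := Option.bind_eq_some_iff.mp hk
    exact eStep_lt_eStep hstep hstep' (ih hj' hk')

lemma eSeq_inj {j k n e : ℕ} (hj : eSeq b j n = Option.some e)
    (hk : eSeq b k n = Option.some e) : j = k := by
  by_contra hne
  rcases Nat.lt_or_gt_of_ne hne with h | h
  · exact (eSeq_lt_eSeq h hj hk).false
  · exact (eSeq_lt_eSeq h hk hj).false

lemma eSeq_antitone {k n n' e e' : ℕ} (hn : n ≤ n') (he : eSeq b k n = Option.some e)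
    (he' : eSeq b k n' = Option.some e') : e' ≤ e := by
  induction n', hn using Nat.le_induction generalizing e' with
  | base => cases he.symm.trans he'; rfl
  | succ n' hn ih =>
    obtain ⟨f, hf, hstep⟩ := Option.bind_eq_some_iff.mp he'
    exact (eStep_le hstep).trans (ih hf)

variable (b) in
lemma finite_setOf_eSeq_eq_none (M : ℕ) : {k | eSeq b k M = none}.Finite := by
  induction M with
  | zero => simp [eSeq]
  | succ M ih =>
    have hdying : ((fun k => eSeq b k M) ⁻¹'
        (Option.some '' {e | eStep (Phi^[M] b) e = none})).Finite :=
      ((finite_setOf_eStep_eq_none _).image _).preimage fun j hj k hk hjk => by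
        obtain ⟨e, -, he⟩ := hj
        exact eSeq_inj he.symm (hjk ▸ he.symm)
    refine (ih.union hdying).subset fun k hk => ?_
    simp only [Set.mem_ofPred_eq, eSeq, Option.bind_eq_none_iff] at hk
    cases h : eSeq b k M with
    | none => exact Or.inl h
    | some e => exact Or.inr ⟨e, hk e h, h.symm⟩

lemma eSeq_ne_none_of_le {k M : ℕ} {a d : ℤ} (hv : cfConv b k = intPt a d)
    (hM : ∀ n ≥ M, ((d.natAbs + 1 : ℕ) : ℕ∞) < pIdx (Phi^[n] b)) (hk : eSeq b k M ≠ none)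
    {n : ℕ} (hn : M ≤ n) : eSeq b k n ≠ none := by
  induction n, hn using Nat.le_induction with
  | base => exact hk
  | succ n hn ih =>
    obtain ⟨e, he⟩ := Option.ne_none_iff_exists'.mp ih
    intro hdead
    rw [eSeq, he, Option.bind_some] at hdead
    have hval := (cfConv_iterate_of_eSeq he).trans hv
    exact (hM n hn).not_ge (pIdx_le_of_eStep_eq_none hdead hval)

lemma exists_eventually_eSeq_eq {k M : ℕ} (h : ∀ n ≥ M, eSeq b k n ≠ none) :
    ∃ e, ∀ᶠ n in atTop, eSeq b k n = Option.some e := by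
  classical
  have hex : ∃ e, ∃ n ≥ M, eSeq b k n = Option.some e :=
    (Option.ne_none_iff_exists'.mp (h M le_rfl)).imp fun e he => ⟨M, le_rfl, he⟩
  obtain ⟨n₀, hn₀, he₀⟩ := Nat.find_spec hex
  refine ⟨Nat.find hex, eventually_atTop.mpr ⟨n₀, fun n hn => ?_⟩⟩
  obtain ⟨e, he⟩ := Option.ne_none_iff_exists'.mp (h n (hn₀.trans hn))
  have hle := eSeq_antitone hn he₀ he
  have hge := Nat.find_min' hex ⟨n, hn₀.trans hn, he⟩
  rw [he, le_antisymm hle hge]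

lemma lt_natAbs_of_eventually_eSeq_eq {k e : ℕ} {a d : ℤ} (hv : cfConv b k = intPt a d)
    (he : ∀ᶠ n in atTop, eSeq b k n = Option.some e) : e < d.natAbs := by
  obtain ⟨n, hn⟩ := eventually_atTop.mp he
  have hstep : eStep (Phi^[n] b) e = Option.some e := by
    simpa only [eSeq, hn n le_rfl, Option.bind_some] using hn (n + 1) (Nat.le_succ n)
  exact lt_natAbs_of_cfConv_eq_intPt (lt_pIdx_of_eStep_eq_self hstep)
    ((cfConv_iterate_of_eSeq (hn n le_rfl)).trans hv)

lemma finite_of_forall_eventually_eSeq_eq {s : Set ℕ} {Q : ℕ}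
    (h : ∀ k ∈ s, ∃ e < Q, ∀ᶠ n in atTop, eSeq b k n = Option.some e) : s.Finite := by
  choose! f hfQ hf using h
  refine Set.Finite.of_injOn (f := f) (fun k hk => hfQ k hk) (fun j hj k hk hjk => ?_)
    (Set.finite_Iio Q)
  obtain ⟨n, hjn, hkn⟩ := ((hf j hj).and (hf k hk)).exists
  exact eSeq_inj hjn (hjk ▸ hkn)

end eSeq

lemma IsExtRat.exists_eq_intPt {v : OnePoint ℝ} (hv : IsExtRat v) : ∃ a d : ℤ, v = intPt a d := by
  rcases hv with rfl | ⟨q, rfl⟩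
  · exact ⟨1, 0, by simp [intPt]⟩
  · refine ⟨q.num, q.den, ?_⟩
    simp [intPt, Rat.cast_def]

/-- **Lemma 7.** If `p⁽ⁿ⁾ → ∞`, then no extended rational occurs infinitely often among
the convergents of `[b₀, b₁, …]`. -/
theorem stmt14 (b : ℕ → ℤ) (hp : PTendsToTop b) (v : OnePoint ℝ) (hv : IsExtRat v) :
    {k : ℕ | cfConv b k = v}.Finite := by
  obtain ⟨a, d, rfl⟩ := hv.exists_eq_intPt
  obtain ⟨M, hM⟩ := hp (d.natAbs + 1)
  have hsurvivors : {k | cfConv b k = intPt a d ∧ eSeq b k M ≠ none}.Finite :=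
    finite_of_forall_eventually_eSeq_eq fun k ⟨hk, hkM⟩ =>
      let ⟨e, he⟩ := exists_eventually_eSeq_eq fun _ hn => eSeq_ne_none_of_le hk hM hkM hn
      ⟨e, lt_natAbs_of_eventually_eSeq_eq hk he, he⟩
  refine ((finite_setOf_eSeq_eq_none b M).union hsurvivors).subset fun k hk => ?_
  by_cases h : eSeq b k M = none
  exacts [Or.inl h, Or.inr ⟨hk, h⟩]
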